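/- arXiv:1110.5455 — 4 statements merged into one kernel-verified Lean document; each statement's English description precedes it below -/
import Mathlib

section
/- Let T₁, …, Tₙ be independent random variables with Tⱼ exponentially distributed with rate j·R (for fixed R > 0). Then the sum Sₙ = T₁ + ⋯ + Tₙ satisfies P(Sₙ ≤ t) = (1 - e^{-t·R})^n for all t ≥ 0. -/
/-!
Induct on `n`. Writing `S = T₁ + ⋯ + Tₙ`, independence of `S` and `Tₙ₊₁` gives
`P(S + Tₙ₊₁ ≤ t) = ∫ P(S ≤ t - y) dP_{Tₙ₊₁}(y)`, and with `c = (n + 1) R` the inductive step is the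
identity `∫₀ᵗ c e^{-cy} (1 - e^{-(t-y)R})ⁿ dy = (1 - e^{-tR})ⁿ⁺¹`, whose integrand is the derivative
of `-(1 - e^{-(t-y)R})ⁿ⁺¹ e^{-cy}`.
-/

open MeasureTheory ProbabilityTheory Real Set
open scoped ENNReal

theorem ProbabilityTheory.IndepFun.measure_add_le_eq_lintegral {Ω : Type*} [MeasurableSpace Ω]
    {μ : Measure Ω} [IsFiniteMeasure μ] {S X : Ω → ℝ} (hSX : IndepFun S X μ)
    (hS : Measurable S) (hX : Measurable X) (t : ℝ) :
    μ {ω | S ω + X ω ≤ t} = ∫⁻ y, μ {ω | S ω ≤ t - y} ∂(μ.map X) := by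
  have hset : MeasurableSet {p : ℝ × ℝ | p.1 + p.2 ≤ t} :=
    measurableSet_le (measurable_fst.add measurable_snd) measurable_const
  have hslice (y : ℝ) : (fun x => (x, y)) ⁻¹' {p : ℝ × ℝ | p.1 + p.2 ≤ t} = Iic (t - y) := by
    ext x
    simp [le_sub_iff_add_le]
  calc μ {ω | S ω + X ω ≤ t}
      = μ.map (fun ω => (S ω, X ω)) {p | p.1 + p.2 ≤ t} :=
        (Measure.map_apply (hS.prodMk hX) hset).symm
    _ = ∫⁻ y, μ.map S ((fun x => (x, y)) ⁻¹' {p | p.1 + p.2 ≤ t}) ∂(μ.map X) := by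
        rw [(indepFun_iff_map_prod_eq_prod_map_map hS.aemeasurable hX.aemeasurable).mp hSX,
          Measure.prod_apply_symm hset]
    _ = ∫⁻ y, μ {ω | S ω ≤ t - y} ∂(μ.map X) := by
        simp_rw [hslice, Measure.map_apply hS measurableSet_Iic]
        rfl

theorem hasDerivAt_neg_one_sub_exp_pow_mul_exp (R t : ℝ) (n : ℕ) (y : ℝ) :
    HasDerivAt (fun y => -((1 - exp (-((t - y) * R))) ^ (n + 1) * exp (-((n + 1) * R * y))))
      ((n + 1) * R * exp (-((n + 1) * R * y)) * (1 - exp (-((t - y) * R))) ^ n) y := by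
  have h1 : HasDerivAt (fun y => 1 - exp (-((t - y) * R))) (-(exp (-((t - y) * R)) * R)) y := by
    simpa using ((((hasDerivAt_id y).const_sub t).mul_const R).neg.exp).const_sub 1
  have h2 : HasDerivAt (fun y => exp (-((n + 1) * R * y)))
      (exp (-((n + 1) * R * y)) * -((n + 1) * R)) y := by
    simpa using (((hasDerivAt_id y).const_mul ((n + 1) * R)).neg.exp)
  refine ((h1.pow (n + 1)).mul h2).neg.congr_deriv ?_
  simp only [Pi.pow_apply, Nat.add_sub_cancel]
  push_cast
  ring

theorem integral_rate_mul_exp_mul_one_sub_exp_pow (R t : ℝ) (n : ℕ) :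
    ∫ y in (0 : ℝ)..t, (n + 1) * R * exp (-((n + 1) * R * y)) * (1 - exp (-((t - y) * R))) ^ n
      = (1 - exp (-(t * R))) ^ (n + 1) := by
  rw [intervalIntegral.integral_eq_sub_of_hasDerivAt
    (fun y _ => hasDerivAt_neg_one_sub_exp_pow_mul_exp R t n y)
    ((by fun_prop : Continuous _).intervalIntegrable _ _)]
  simp

/-- The CDF of the maximum of `n` i.i.d. `Exp(R)` variables; the `if` makes it vanish on `t < 0`
also for `n = 0`, where the sum is `0`. -/
noncomputable def maxExpCDF (R : ℝ) (n : ℕ) (t : ℝ) : ℝ≥0∞ :=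
  if 0 ≤ t then ENNReal.ofReal ((1 - exp (-(t * R))) ^ n) else 0

theorem measurable_maxExpCDF (R : ℝ) (n : ℕ) : Measurable (maxExpCDF R n) :=
  Measurable.ite measurableSet_Ici (by fun_prop) measurable_const

theorem exponentialPDF_mul_maxExpCDF_sub {R : ℝ} (hR : 0 ≤ R) (n : ℕ) (t y : ℝ) :
    exponentialPDF ((n + 1) * R) y * maxExpCDF R n (t - y)
      = (Icc 0 t).indicator (fun y => ENNReal.ofReal
          ((n + 1) * R * exp (-((n + 1) * R * y)) * (1 - exp (-((t - y) * R))) ^ n)) y := by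
  rcases lt_or_ge y 0 with hy | hy
  · simp [exponentialPDF_of_neg hy, hy.not_ge]
  rcases le_or_gt y t with hyt | hyt
  · rw [exponentialPDF_of_nonneg hy, maxExpCDF, if_pos (sub_nonneg.mpr hyt),
      indicator_of_mem (mem_Icc.mpr ⟨hy, hyt⟩), ← ENNReal.ofReal_mul (by positivity)]
  · simp [maxExpCDF, hyt.not_ge, sub_nonneg]

theorem lintegral_exponentialPDF_mul_maxExpCDF_sub {R : ℝ} (hR : 0 ≤ R) (n : ℕ) (t : ℝ) :
    ∫⁻ y, exponentialPDF ((n + 1) * R) y * maxExpCDF R n (t - y) = maxExpCDF R (n + 1) t := by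
  simp_rw [exponentialPDF_mul_maxExpCDF_sub hR, lintegral_indicator measurableSet_Icc]
  by_cases ht : 0 ≤ t
  · have hnonneg : ∀ y ∈ Icc 0 t,
        0 ≤ (n + 1) * R * exp (-((n + 1) * R * y)) * (1 - exp (-((t - y) * R))) ^ n :=
      fun y hy => by
        have : exp (-((t - y) * R)) ≤ 1 :=
          exp_le_one_iff.mpr (neg_nonpos.mpr (mul_nonneg (sub_nonneg.mpr hy.2) hR))
        have : 0 ≤ 1 - exp (-((t - y) * R)) := by linarith
        positivity
    rw [← ofReal_integral_eq_lintegral_ofReal (Continuous.integrableOn_Icc (by fun_prop))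
        ((ae_restrict_iff' measurableSet_Icc).mpr (ae_of_all _ hnonneg)),
      integral_Icc_eq_integral_Ioc, ← intervalIntegral.integral_of_le ht,
      integral_rate_mul_exp_mul_one_sub_exp_pow, maxExpCDF, if_pos ht]
  · simp [maxExpCDF, ht]

theorem lintegral_expMeasure_eq_lintegral_exponentialPDF_mul (r : ℝ) {g : ℝ → ℝ≥0∞}
    (hg : Measurable g) : ∫⁻ y, g y ∂(expMeasure r) = ∫⁻ y, exponentialPDF r y * g y :=
  lintegral_withDensity_eq_lintegral_mul volume
    (measurable_exponentialPDFReal r).ennreal_ofReal hg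

theorem measure_sum_le_eq_maxExpCDF {Ω : Type*} [MeasureSpace Ω]
    [IsProbabilityMeasure (ℙ : Measure Ω)] {R : ℝ} (hR : 0 ≤ R) (n : ℕ)
    (T : Fin n → Ω → ℝ) (hmeas : ∀ j, Measurable (T j))
    (hindep : iIndepFun T ℙ)
    (hdist : ∀ j : Fin n, Measure.map (T j) ℙ = expMeasure (((j : ℕ) + 1) * R)) (t : ℝ) :
    ℙ {ω | ∑ j, T j ω ≤ t} = maxExpCDF R n t := by
  induction n generalizing t with
  | zero => by_cases ht : 0 ≤ t <;> simp [maxExpCDF, ht]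
  | succ n ih =>
    set S : Ω → ℝ := ∑ j : Fin n, T j.castSucc
    have hS_indep : IndepFun S (T (Fin.last n)) ℙ := by
      have := hindep.indepFun_finsetSum_of_notMem hmeas
        (s := Finset.univ.map Fin.castSuccEmb) (i := Fin.last n) (by simp [Fin.castSucc_ne_last])
      simpa [Finset.sum_map] using this
    have hS_cdf (s : ℝ) : ℙ {ω | S ω ≤ s} = maxExpCDF R n s := by
      simpa [S] using ih (fun j => T j.castSucc) (fun j => hmeas _)
        (hindep.precomp (Fin.castSucc_injective n)) (fun j => by simpa using hdist j.castSucc) s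
    calc ℙ {ω | ∑ j, T j ω ≤ t}
        = ℙ {ω | S ω + T (Fin.last n) ω ≤ t} := by simp [S, Fin.sum_univ_castSucc]
      _ = ∫⁻ y, maxExpCDF R n (t - y) ∂(expMeasure ((n + 1) * R)) := by
        rw [hS_indep.measure_add_le_eq_lintegral (by fun_prop) (hmeas _)]
        simp [hS_cdf, hdist]
      _ = maxExpCDF R (n + 1) t := by
        rw [lintegral_expMeasure_eq_lintegral_exponentialPDF_mul _
            (g := fun y => maxExpCDF R n (t - y))
            ((measurable_maxExpCDF R n).comp (measurable_const_sub t)),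
          lintegral_exponentialPDF_mul_maxExpCDF_sub hR]

theorem stmt2_general {Ω : Type*} [MeasureSpace Ω] [IsProbabilityMeasure (ℙ : Measure Ω)]
    (R : ℝ) (hR : 0 < R) (n : ℕ)
    (T : Fin n → Ω → ℝ) (hmeas : ∀ j, Measurable (T j))
    (hindep : iIndepFun (m := fun _ => Real.measurableSpace) T ℙ)
    (hdist : ∀ j : Fin n, Measure.map (T j) ℙ = expMeasure (((j : ℕ) + 1) * R))
    (t : ℝ) (ht : 0 ≤ t) :
    ℙ {ω | ∑ j, T j ω ≤ t} = ENNReal.ofReal ((1 - exp (-(t * R))) ^ n) := by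
  rw [measure_sum_le_eq_maxExpCDF hR.le n T hmeas hindep hdist t, maxExpCDF, if_pos ht]

theorem stmt2 {Ω : Type*} [MeasureSpace Ω] [IsProbabilityMeasure (ℙ : Measure Ω)]
    (R : ℝ) (hR : 0 < R) (n : ℕ) (hn : 1 ≤ n)
    (T : Fin n → Ω → ℝ) (hmeas : ∀ j, Measurable (T j))
    (hindep : iIndepFun (m := fun _ => Real.measurableSpace) T ℙ)
    (hdist : ∀ j : Fin n, Measure.map (T j) ℙ = expMeasure (((j : ℕ) + 1) * R))
    (t : ℝ) (ht : 0 ≤ t) :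
    ℙ {ω | ∑ j, T j ω ≤ t} = ENNReal.ofReal ((1 - exp (-(t * R))) ^ n) :=
  stmt2_general R hR n T hmeas hindep hdist t ht
end

section
/- For fixed Q > 0 and integers 1 ≤ n ≤ k, the convolution of f_{n,k}(x) = (k!/((k-n)!(n-1)!))·Q·(e^{Qx}-1)^{k-n}·e^{-kQx} with the exponential density g(x) = (k+1)·Q·e^{-(k+1)·Q·x} equals f_{n,k+1}, i.e., ∫₀ˣ f_{n,k}(u)·g(x-u) du = ((k+1)!/((k+1-n)!(n-1)!))·Q·(e^{Qx}-1)^{k+1-n}·e^{-(k+1)Qx} for all x ≥ 0. -/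
/-! Up to constants, the integrand is `exp (-(k+1) Q x) · (e^{Qu} - 1)^(k-n) · Q e^{Qu}`: the two
exponentials combine so that the dependence on `u` is proportional to the derivative of `(e^{Qu} - 1)^(k-n+1)`,
and the fundamental theorem of calculus finishes the computation. -/

open Real

theorem hasDerivAt_exp_mul_sub_one_pow (Q u : ℝ) (m : ℕ) :
    HasDerivAt (fun u => (exp (Q * u) - 1) ^ (m + 1))
      ((m + 1) * (Q * exp (Q * u) * (exp (Q * u) - 1) ^ m)) u := by
  have hexp : HasDerivAt (fun u => exp (Q * u) - 1) (exp (Q * u) * Q) u := by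
    simpa using (((hasDerivAt_id u).const_mul Q).exp).sub_const 1
  refine (hexp.pow (m + 1)).congr_deriv ?_
  push_cast [Nat.add_sub_cancel]
  ring

theorem integral_exp_mul_sub_one_pow (Q x : ℝ) (m : ℕ) :
    ∫ u in (0:ℝ)..x, Q * exp (Q * u) * (exp (Q * u) - 1) ^ m
      = (exp (Q * x) - 1) ^ (m + 1) / (m + 1) := by
  have hderiv (u : ℝ) : HasDerivAt (fun u => (exp (Q * u) - 1) ^ (m + 1) / (m + 1))
      (Q * exp (Q * u) * (exp (Q * u) - 1) ^ m) u := by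
    refine ((hasDerivAt_exp_mul_sub_one_pow Q u m).div_const ((m : ℝ) + 1)).congr_deriv ?_
    field_simp
  rw [intervalIntegral.integral_eq_sub_of_hasDerivAt (fun u _ => hderiv u)
    (by apply Continuous.intervalIntegrable; fun_prop)]
  simp

theorem exp_neg_mul_mul_exp_neg_succ_mul_sub (k : ℕ) (Q x u : ℝ) :
    exp (-(k * Q * u)) * exp (-(((k : ℝ) + 1) * Q * (x - u)))
      = exp (-(((k : ℝ) + 1) * Q * x)) * exp (Q * u) := by
  rw [← exp_add, ← exp_add]
  ring_nf

theorem factorial_succ_div_factorial_succ_mul (k m j : ℕ) :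
    ((k + 1).factorial : ℝ) / ((m + 1).factorial * j.factorial)
      = (k.factorial : ℝ) / (m.factorial * j.factorial) * (k + 1) / (m + 1) := by
  push_cast [Nat.factorial_succ]
  field_simp

theorem stmt7_general (Q : ℝ) (n k : ℕ) (hnk : n ≤ k) (x : ℝ) :
    ∫ u in (0:ℝ)..x,
        (((k.factorial : ℝ) / ((k - n).factorial * (n - 1).factorial)) * Q *
          (exp (Q * u) - 1) ^ (k - n) * exp (-(k * Q * u))) *
        (((k : ℝ) + 1) * Q * exp (-(((k : ℝ) + 1) * Q * (x - u))))
      = (((k + 1).factorial : ℝ) / ((k + 1 - n).factorial * (n - 1).factorial)) * Q *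
          (exp (Q * x) - 1) ^ (k + 1 - n) * exp (-(((k : ℝ) + 1) * Q * x)) := by
  set C : ℝ := (k.factorial : ℝ) / ((k - n).factorial * (n - 1).factorial)
  have hintegrand (u : ℝ) :
      C * Q * (exp (Q * u) - 1) ^ (k - n) * exp (-(k * Q * u)) *
          (((k : ℝ) + 1) * Q * exp (-(((k : ℝ) + 1) * Q * (x - u))))
        = C * (k + 1) * Q * exp (-(((k : ℝ) + 1) * Q * x)) *
          (Q * exp (Q * u) * (exp (Q * u) - 1) ^ (k - n)) := by
    linear_combination C * Q * (exp (Q * u) - 1) ^ (k - n) * ((k : ℝ) + 1) * Q *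
      exp_neg_mul_mul_exp_neg_succ_mul_sub k Q x u
  simp_rw [hintegrand, intervalIntegral.integral_const_mul, integral_exp_mul_sub_one_pow,
    show k + 1 - n = k - n + 1 by omega, factorial_succ_div_factorial_succ_mul, C]
  field_simp

theorem stmt7 (Q : ℝ) (hQ : 0 < Q) (n k : ℕ) (hn : 1 ≤ n) (hnk : n ≤ k) (x : ℝ) (hx : 0 ≤ x) :
    ∫ u in (0:ℝ)..x,
        (((k.factorial : ℝ) / ((k - n).factorial * (n - 1).factorial)) * Q *
          (exp (Q * u) - 1) ^ (k - n) * exp (-(k * Q * u))) *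
        (((k : ℝ) + 1) * Q * exp (-(((k : ℝ) + 1) * Q * (x - u))))
      = (((k + 1).factorial : ℝ) / ((k + 1 - n).factorial * (n - 1).factorial)) * Q *
          (exp (Q * x) - 1) ^ (k + 1 - n) * exp (-(((k : ℝ) + 1) * Q * x)) :=
  stmt7_general Q n k hnk x
end

section
/- Let the sum S_n^k = T_n + T_{n+1} + ⋯ + T_k of independent random variables with T_i ~ Exp(i·Q) for a fixed Q > 0. Then P(S_n^k ≤ t) = (k!/((k-n)!·(n-1)!)) · Q · ∫₀ᵗ (e^{Q·x}-1)^{k-n} · e^{-k·Q·x} dx for all t ≥ 0. -/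
open MeasureTheory ProbabilityTheory Real

/-!
By induction on `k`: the density of `T_n + ⋯ + T_k` is
`f_k(x) = k!/((k-n)!(n-1)!) · Q (e^{Qx} - 1)^{k-n} e^{-kQx}` on `x ≥ 0`, and `f_{k+1}` is the
convolution of `f_k` with the `Exp((k+1)Q)` density. In that convolution the exponentials
combine to `e^{-(k+1)Qz} e^{Qy}`, so only `∫₀ᶻ (e^{Qy} - 1)^{k-n} e^{Qy} dy
= (e^{Qz} - 1)^{k-n+1} / ((k-n+1)Q)` remains. Integrating `f_k` over `[0, t]` gives the claim.
-/

open Set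
open scoped ENNReal

section SupportedOnNonneg

variable {f g : ℝ → ℝ≥0∞}

lemma setLIntegral_Iic_eq_setLIntegral_Icc (hf : ∀ x < 0, f x = 0) (t : ℝ) :
    ∫⁻ x in Iic t, f x = ∫⁻ x in Icc 0 t, f x := by
  have hf_ind : f = (Ici 0).indicator f := by
    ext x
    by_cases hx : 0 ≤ x
    · rw [indicator_of_mem (mem_Ici.2 hx)]
    · rw [indicator_of_notMem (by simpa using hx), hf x (not_le.1 hx)]
  conv_lhs => rw [hf_ind]
  rw [setLIntegral_indicator measurableSet_Ici, Ici_inter_Iic]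

lemma lconvolution_apply_eq_setLIntegral_Icc (hf : ∀ x < 0, f x = 0) (hg : ∀ x < 0, g x = 0)
    (z : ℝ) : (f ⋆ₗ g) z = ∫⁻ y in Icc 0 z, f y * g (z - y) := by
  have h_ind : (fun y => f y * g (-y + z)) = (Icc 0 z).indicator fun y => f y * g (z - y) := by
    ext y
    by_cases hy : y ∈ Icc 0 z
    · rw [indicator_of_mem hy, neg_add_eq_sub]
    · rw [indicator_of_notMem hy]
      rcases not_and_or.1 (mem_Icc.not.1 hy) with hy | hy
      · rw [hf y (not_le.1 hy), zero_mul]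
      · rw [hg _ (by linarith [not_le.1 hy]), mul_zero]
  rw [lconvolution_def, h_ind, lintegral_indicator measurableSet_Icc]

end SupportedOnNonneg

lemma setLIntegral_Icc_ofReal_eq_ofReal_intervalIntegral {f : ℝ → ℝ} {a b : ℝ} (hab : a ≤ b)
    (hf : ContinuousOn f (Icc a b)) (hf_nonneg : ∀ x ∈ Icc a b, 0 ≤ f x) :
    ∫⁻ x in Icc a b, ENNReal.ofReal (f x) = ENNReal.ofReal (∫ x in a..b, f x) := by
  rw [intervalIntegral.integral_of_le hab, ← integral_Icc_eq_integral_Ioc,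
    ofReal_integral_eq_lintegral_ofReal (hf.integrableOn_compact isCompact_Icc)]
  filter_upwards [ae_restrict_mem measurableSet_Icc] with x hx using hf_nonneg x hx

lemma integral_exp_sub_one_pow_mul_exp {Q : ℝ} (hQ : Q ≠ 0) (m : ℕ) (z : ℝ) :
    ∫ y in (0 : ℝ)..z, (exp (Q * y) - 1) ^ m * exp (Q * y)
      = (exp (Q * z) - 1) ^ (m + 1) / ((m + 1) * Q) := by
  have h_deriv : ∀ y ∈ uIcc 0 z, HasDerivAt (fun y => (exp (Q * y) - 1) ^ (m + 1) / ((m + 1) * Q))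
      ((exp (Q * y) - 1) ^ m * exp (Q * y)) y := by
    intro y _
    have h := ((((hasDerivAt_id y).const_mul Q).exp.sub_const 1).pow (m + 1)).div_const
      ((m + 1) * Q)
    refine h.congr_deriv ?_
    simp only [id, Nat.add_sub_cancel]
    push_cast
    field_simp
  rw [intervalIntegral.integral_eq_sub_of_hasDerivAt h_deriv
    ((by fun_prop : Continuous fun y => (exp (Q * y) - 1) ^ m * exp (Q * y)).intervalIntegrable _ _)]
  simp

noncomputable def expSumCoeff (n k : ℕ) : ℝ :=
  (k.factorial : ℝ) / ((k - n).factorial * (n - 1).factorial)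

noncomputable def expSumPDFReal (Q : ℝ) (n k : ℕ) (x : ℝ) : ℝ :=
  if 0 ≤ x then expSumCoeff n k * Q * ((exp (Q * x) - 1) ^ (k - n) * exp (-(k * Q * x))) else 0

noncomputable def expSumPDF (Q : ℝ) (n k : ℕ) (x : ℝ) : ℝ≥0∞ :=
  ENNReal.ofReal (expSumPDFReal Q n k x)

section ExpSumPDF

variable {Q : ℝ} {n k : ℕ}

lemma expSumCoeff_nonneg : 0 ≤ expSumCoeff n k := by
  unfold expSumCoeff; positivity

lemma expSumCoeff_succ (hk : n ≤ k) :
    expSumCoeff n (k + 1) = expSumCoeff n k * (k + 1) / ((k - n : ℕ) + 1) := by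
  have hsub : k + 1 - n = k - n + 1 := by omega
  have hm : ((k - n).factorial : ℝ) ≠ 0 := by positivity
  have hp : ((n - 1).factorial : ℝ) ≠ 0 := by positivity
  simp only [expSumCoeff, hsub, Nat.factorial_succ]
  push_cast
  field_simp

lemma expSumPDF_of_neg {x : ℝ} (hx : x < 0) : expSumPDF Q n k x = 0 := by
  simp [expSumPDF, expSumPDFReal, not_le.2 hx]

lemma measurable_expSumPDF : Measurable (expSumPDF Q n k) :=
  ENNReal.measurable_ofReal.comp (Measurable.ite measurableSet_Ici (by fun_prop) measurable_const)

lemma exp_mul_sub_one_nonneg (hQ : 0 ≤ Q) {x : ℝ} (hx : 0 ≤ x) : 0 ≤ exp (Q * x) - 1 :=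
  sub_nonneg.2 (one_le_exp (mul_nonneg hQ hx))

lemma expSumPDF_self (hn : 1 ≤ n) : expSumPDF Q n n = exponentialPDF (n * Q) := by
  ext x
  rw [expSumPDF, exponentialPDF_eq, expSumPDFReal, expSumCoeff]
  obtain ⟨p, rfl⟩ : ∃ p, n = p + 1 := ⟨n - 1, by omega⟩
  have hp : (p.factorial : ℝ) ≠ 0 := by positivity
  simp only [Nat.sub_self, pow_zero, Nat.add_sub_cancel, Nat.factorial_zero, Nat.factorial_succ]
  push_cast
  field_simp

lemma expSumPDF_mul_exponentialPDF (hQ : 0 ≤ Q) {y z : ℝ} (hy : 0 ≤ y) (hyz : y ≤ z) :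
    expSumPDF Q n k y * exponentialPDF ((k + 1) * Q) (z - y)
      = ENNReal.ofReal (expSumCoeff n k * Q * ((k + 1) * Q) * exp (-((k + 1) * Q * z)) *
          ((exp (Q * y) - 1) ^ (k - n) * exp (Q * y))) := by
  have h_nonneg := exp_mul_sub_one_nonneg hQ hy
  have h_exp : exp (-(k * Q * y)) * exp (-((k + 1) * Q * (z - y)))
      = exp (-((k + 1) * Q * z)) * exp (Q * y) := by
    rw [← exp_add, ← exp_add]; ring_nf
  rw [expSumPDF, expSumPDFReal, if_pos hy, exponentialPDF_of_nonneg (sub_nonneg.2 hyz),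
    ← ENNReal.ofReal_mul (by have := expSumCoeff_nonneg (n := n) (k := k); positivity)]
  congr 1
  linear_combination expSumCoeff n k * Q * ((k + 1) * Q) * (exp (Q * y) - 1) ^ (k - n) * h_exp

lemma expSumPDF_lconvolution_exponentialPDF (hQ : 0 < Q) (hk : n ≤ k) :
    expSumPDF Q n k ⋆ₗ exponentialPDF ((k + 1 : ℕ) * Q) = expSumPDF Q n (k + 1) := by
  ext z
  rw [lconvolution_apply_eq_setLIntegral_Icc (fun _ => expSumPDF_of_neg)
    (fun _ => exponentialPDF_of_neg)]
  rcases lt_or_ge z 0 with hz | hz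
  · rw [Icc_eq_empty (by linarith), Measure.restrict_empty, lintegral_zero_measure,
      expSumPDF_of_neg hz]
  set A := expSumCoeff n k * Q * ((k + 1) * Q) * exp (-((k + 1) * Q * z)) with hA
  calc ∫⁻ y in Icc 0 z, expSumPDF Q n k y * exponentialPDF ((k + 1 : ℕ) * Q) (z - y)
      = ∫⁻ y in Icc 0 z, ENNReal.ofReal (A * ((exp (Q * y) - 1) ^ (k - n) * exp (Q * y))) :=
        setLIntegral_congr_fun measurableSet_Icc fun y hy => by
          push_cast
          exact expSumPDF_mul_exponentialPDF hQ.le hy.1 hy.2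
    _ = ENNReal.ofReal (∫ y in (0 : ℝ)..z, A * ((exp (Q * y) - 1) ^ (k - n) * exp (Q * y))) :=
        setLIntegral_Icc_ofReal_eq_ofReal_intervalIntegral hz (by fun_prop) fun y hy =>
          have := exp_mul_sub_one_nonneg hQ.le hy.1
          have := expSumCoeff_nonneg (n := n) (k := k)
          by positivity
    _ = expSumPDF Q n (k + 1) z := by
        have hsub : k + 1 - n = k - n + 1 := by omega
        rw [intervalIntegral.integral_const_mul, integral_exp_sub_one_pow_mul_exp hQ.ne',
          expSumPDF, expSumPDFReal, if_pos hz, expSumCoeff_succ hk, hsub, hA]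
        congr 1
        push_cast
        field_simp

end ExpSumPDF

lemma map_sum_Icc_eq_withDensity_expSumPDF {Ω : Type*} [MeasurableSpace Ω] {μ : Measure Ω}
    [IsFiniteMeasure μ] {Q : ℝ} (hQ : 0 < Q) {n k : ℕ} (hn : 1 ≤ n) (hk : n ≤ k)
    {T : ℕ → Ω → ℝ} (hmeas : ∀ i, Measurable (T i)) (hindep : iIndepFun T μ)
    (hdist : ∀ i ∈ Finset.Icc n k, μ.map (T i) = expMeasure (i * Q)) :
    μ.map (∑ i ∈ Finset.Icc n k, T i) = volume.withDensity (expSumPDF Q n k) := by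
  induction k, hk using Nat.le_induction with
  | base =>
    rw [Finset.Icc_self, Finset.sum_singleton, hdist n (by simp), expSumPDF_self hn]
    rfl
  | succ k hk ih =>
    have h_indep : (∑ i ∈ Finset.Icc n k, T i) ⟂ᵢ[μ] T (k + 1) :=
      hindep.indepFun_finsetSum_of_notMem hmeas (by simp)
    rw [Finset.sum_Icc_succ_top (by omega),
      h_indep.map_add_eq_map_conv_map (by fun_prop) (hmeas _),
      ih fun i hi => hdist i (Finset.Icc_subset_Icc_right k.le_succ hi),
      hdist (k + 1) (by simp; omega)]
    change _ ∗ volume.withDensity (exponentialPDF _) = _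
    rw [conv_withDensity_eq_lconvolution (g := exponentialPDF _) measurable_expSumPDF
      (measurable_exponentialPDFReal _).ennreal_ofReal,
      expSumPDF_lconvolution_exponentialPDF hQ hk]

theorem stmt8 {Ω : Type*} [MeasureSpace Ω] [IsProbabilityMeasure (ℙ : Measure Ω)]
    (Q : ℝ) (hQ : 0 < Q) (n k : ℕ) (hn : 1 ≤ n) (hnk : n ≤ k)
    (T : ℕ → Ω → ℝ) (hmeas : ∀ i, Measurable (T i))
    (hindep : iIndepFun (m := fun _ => Real.measurableSpace) T ℙ)
    (hdist : ∀ i ∈ Finset.Icc n k, Measure.map (T i) ℙ = expMeasure ((i : ℝ) * Q))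
    (t : ℝ) (ht : 0 ≤ t) :
    ℙ {ω | ∑ i ∈ Finset.Icc n k, T i ω ≤ t}
      = ENNReal.ofReal (((k.factorial : ℝ) / ((k - n).factorial * (n - 1).factorial)) * Q *
          ∫ x in (0:ℝ)..t, (exp (Q * x) - 1) ^ (k - n) * exp (-(k * Q * x))) := by
  have h_sum_meas : Measurable (∑ i ∈ Finset.Icc n k, T i) := by fun_prop
  have h_set : {ω | ∑ i ∈ Finset.Icc n k, T i ω ≤ t} = (∑ i ∈ Finset.Icc n k, T i) ⁻¹' Iic t := by
    ext ω; simp [Finset.sum_apply]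
  calc ℙ {ω | ∑ i ∈ Finset.Icc n k, T i ω ≤ t}
      = ∫⁻ x in Icc 0 t, expSumPDF Q n k x := by
        rw [h_set, ← Measure.map_apply h_sum_meas measurableSet_Iic,
          map_sum_Icc_eq_withDensity_expSumPDF hQ hn hnk hmeas hindep hdist,
          withDensity_apply _ measurableSet_Iic,
          setLIntegral_Iic_eq_setLIntegral_Icc (fun _ => expSumPDF_of_neg)]
    _ = ∫⁻ x in Icc 0 t, ENNReal.ofReal
          (expSumCoeff n k * Q * ((exp (Q * x) - 1) ^ (k - n) * exp (-(k * Q * x)))) :=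
        setLIntegral_congr_fun measurableSet_Icc fun x hx => by
          rw [expSumPDF, expSumPDFReal, if_pos hx.1]
    _ = _ := by
        rw [setLIntegral_Icc_ofReal_eq_ofReal_intervalIntegral ht (by fun_prop) fun x hx =>
            have := exp_mul_sub_one_nonneg hQ.le hx.1
            have := expSumCoeff_nonneg (n := n) (k := k)
            by positivity,
          intervalIntegral.integral_const_mul, expSumCoeff]
end

section
/- Fix reals W > 0 and 0 < S ≤ W, and an integer n ≥ 1. Then ∑_{k=n}^∞ [ (k!/((k-n)!(n-1)!)) · W · ∫₀ᵗ (e^{Wx}-1)^{k-n} e^{-kWx} dx ] · (1/k)·(S/W) · ∏_{i=n}^{k-1} (1 - (1/i)·(S/W)) = 1 - e^{-t·S} for every t ≥ 0. -/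
/-!
With `c = n - S / W ≥ 0`, the coefficient in front of the `j`-th integral equals
`S * Ring.choose (c + j - 1) j`, and the integrand equals
`(1 - e^{-Wx})^j e^{-nWx}`. By the negative binomial series
`∑ choose (c + j - 1) j z^j = (1 - z)^{-c}` at `z = 1 - e^{-Wx}`, the integrands sum to
`S e^{cWx} e^{-nWx} = S e^{-Sx}`. All terms are nonnegative, so the sum can be taken under the
integral, and `∫₀ᵗ S e^{-Sx} dx = 1 - e^{-tS}`.
-/

open Real Finset MeasureTheory
open scoped Interval

open Polynomial in
theorem ascPochhammer_eval_eq_prod_range {R : Type*} [CommSemiring R] (n : ℕ) (r : R) :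
    (ascPochhammer R n).eval r = ∏ i ∈ range n, (r + i) := by
  induction n with
  | zero => simp
  | succ n ih => rw [ascPochhammer_succ_eval, ih, prod_range_succ]

theorem Ring.choose_add_natCast_sub_one_eq_prod_div {K : Type*} [Field K] [CharZero K] (c : K)
    (j : ℕ) : Ring.choose (c + j - 1) j = (∏ i ∈ range j, (c + i)) / j.factorial := by
  rw [← Ring.multichoose_eq, eq_div_iff (Nat.cast_ne_zero.mpr j.factorial_ne_zero), mul_comm,
    ← nsmul_eq_mul, Ring.factorial_nsmul_multichoose_eq_ascPochhammer,
    Polynomial.ascPochhammer_smeval_eq_eval, ascPochhammer_eval_eq_prod_range]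

theorem Ring.choose_add_natCast_sub_one_nonneg {c : ℝ} (hc : 0 ≤ c) (j : ℕ) :
    0 ≤ Ring.choose (c + j - 1) j := by
  rw [Ring.choose_add_natCast_sub_one_eq_prod_div]
  positivity

theorem Real.hasSum_choose_mul_one_sub_exp_neg_pow (c : ℝ) {y : ℝ} (hy : 0 ≤ y) :
    HasSum (fun j : ℕ => Ring.choose (c + j - 1) j * (1 - exp (-y)) ^ j) (exp (c * y)) := by
  have hz : 1 - exp (-y) ∈ Metric.eball (0 : ℝ) 1 := by
    have h1 := exp_pos (-y)
    have h2 : exp (-y) ≤ 1 := exp_le_one_iff.mpr (by linarith)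
    rw [Metric.mem_eball, edist_zero_right, enorm_eq_ofReal_abs, ENNReal.ofReal_lt_one, abs_lt]
    constructor <;> linarith
  have := (Real.one_div_one_sub_rpow_hasFPowerSeriesOnBall_zero c).hasSum hz
  simp only [FormalMultilinearSeries.ofScalars_apply_eq, smul_eq_mul, zero_add,
    sub_sub_cancel] at this
  rwa [← exp_mul, one_div, ← exp_neg, neg_mul, neg_neg, mul_comm] at this

theorem factorial_div_mul_prod_one_sub_eq_choose {n : ℕ} (hn : 1 ≤ n) (r : ℝ) (j : ℕ) :
    ((n + j).factorial : ℝ) / (j.factorial * (n - 1).factorial) * (1 / ((n + j : ℕ) : ℝ)) *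
        ∏ i ∈ Ico n (n + j), (1 - 1 / (i : ℝ) * r) =
      Ring.choose (n - r + j - 1) j := by
  obtain ⟨m, rfl⟩ := Nat.exists_eq_add_of_le' hn
  have hfact : ((m + 1 + j).factorial : ℝ) =
      ((m + 1 + j : ℕ) : ℝ) * m.factorial * ∏ i ∈ range j, ((m + 1 + i : ℕ) : ℝ) := by
    rw [Nat.add_right_comm, Nat.factorial_succ, ← Nat.factorial_mul_ascFactorial,
      Nat.ascFactorial_eq_prod_range]
    push_cast
    ring
  have hprod : ∏ i ∈ range j, ((m + 1 + i : ℕ) : ℝ) * (1 - 1 / ((m + 1 + i : ℕ) : ℝ) * r) =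
      ∏ i ∈ range j, (((m + 1 : ℕ) : ℝ) - r + i) := by
    refine prod_congr rfl fun i _ => ?_
    field_simp
    push_cast
    ring
  rw [Ring.choose_add_natCast_sub_one_eq_prod_div, prod_Ico_eq_prod_range,
    Nat.add_sub_cancel_left, hfact, Nat.add_sub_cancel, ← hprod, prod_mul_distrib]
  field_simp

theorem Real.exp_sub_one_pow_mul_exp_neg (a x : ℝ) (n j : ℕ) :
    (exp (a * x) - 1) ^ j * exp (-((n + j : ℕ) * a * x)) =
      (1 - exp (-(a * x))) ^ j * exp (-(n * a * x)) := by
  have h : (exp (a * x) - 1) * exp (-(a * x)) = 1 - exp (-(a * x)) := by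
    rw [sub_mul, ← exp_add, add_neg_cancel, exp_zero, one_mul]
  have hsplit : exp (-((n + j : ℕ) * a * x)) = exp (-(a * x)) ^ j * exp (-(n * a * x)) := by
    rw [← exp_nat_mul, ← exp_add]
    push_cast
    ring_nf
  rw [hsplit, ← h, mul_pow]
  ring

theorem intervalIntegral.hasSum_integral_of_nonneg {μ : Measure ℝ} {a b : ℝ} {F : ℕ → ℝ → ℝ}
    {f : ℝ → ℝ} (hF_meas : ∀ j, AEStronglyMeasurable (F j) (μ.restrict (Ι a b)))
    (hF_nonneg : ∀ j, ∀ x ∈ Ι a b, 0 ≤ F j x)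
    (hF_sum : ∀ x ∈ Ι a b, HasSum (fun j => F j x) (f x))
    (hf : IntervalIntegrable f μ a b) :
    HasSum (fun j => ∫ x in a..b, F j x ∂μ) (∫ x in a..b, f x ∂μ) := by
  refine intervalIntegral.hasSum_integral_of_dominated_convergence F hF_meas
    (fun j => ae_of_all _ fun x hx => (Real.norm_of_nonneg (hF_nonneg j x hx)).le)
    (ae_of_all _ fun x hx => (hF_sum x hx).summable) ?_ (ae_of_all _ hF_sum)
  refine hf.congr_ae ?_
  rw [Filter.EventuallyEq, ae_restrict_iff' measurableSet_uIoc]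
  exact ae_of_all _ fun x hx => (hF_sum x hx).tsum_eq.symm

theorem integral_mul_exp_neg_mul (s t : ℝ) :
    ∫ x in (0 : ℝ)..t, s * exp (-(s * x)) = 1 - exp (-(t * s)) := by
  have hderiv : ∀ x ∈ Set.uIcc 0 t,
      HasDerivAt (fun y => -exp (-(s * y))) (s * exp (-(s * x))) x := fun x _ => by
    have hlin : HasDerivAt (fun y => -(s * y)) (-s) x := by
      simpa using ((hasDerivAt_id' x).const_mul s).fun_neg
    exact hlin.exp.fun_neg.congr_deriv (by ring)
  rw [intervalIntegral.integral_eq_sub_of_hasDerivAt hderiv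
    (Continuous.intervalIntegrable (by fun_prop) _ _)]
  simp [mul_comm]
  ring

theorem hasSum_mul_choose_mul_exp_neg (ν : ℝ) {W : ℝ} (hW : W ≠ 0) (S : ℝ) {x : ℝ}
    (hx : 0 ≤ W * x) :
    HasSum (fun j : ℕ =>
        S * Ring.choose (ν - S / W + j - 1) j * ((1 - exp (-(W * x))) ^ j * exp (-(ν * W * x))))
      (S * exp (-(S * x))) := by
  have h := ((Real.hasSum_choose_mul_one_sub_exp_neg_pow (ν - S / W) hx).mul_right
    (exp (-(ν * W * x)))).mul_left S
  have hexp : (ν - S / W) * (W * x) + -(ν * W * x) = -(S * x) := by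
    field_simp
    ring
  rw [← exp_add, hexp] at h
  simpa only [mul_assoc] using h

theorem summand_eq_integral_choose {n : ℕ} (hn : 1 ≤ n) {W : ℝ} (hW : W ≠ 0) (S t : ℝ) (j : ℕ) :
    (((n + j).factorial : ℝ) / ((j.factorial : ℝ) * (n - 1).factorial) * W *
          ∫ x in (0:ℝ)..t, (exp (W * x) - 1) ^ j * exp (-((n + j : ℕ) * W * x))) *
        ((1 / ((n + j : ℕ) : ℝ)) * (S / W)) *
        ∏ i ∈ Ico n (n + j), (1 - (1 / (i : ℝ)) * (S / W)) =
      ∫ x in (0:ℝ)..t, S * Ring.choose (n - S / W + j - 1) j *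
        ((1 - exp (-(W * x))) ^ j * exp (-(n * W * x))) := by
  simp_rw [exp_sub_one_pow_mul_exp_neg, intervalIntegral.integral_const_mul,
    ← factorial_div_mul_prod_one_sub_eq_choose hn]
  generalize ∫ x in (0:ℝ)..t, (1 - exp (-(W * x))) ^ j * exp (-(n * W * x)) = I
  field_simp

theorem stmt12 (W S : ℝ) (hW : 0 < W) (hS : 0 < S) (hSW : S ≤ W)
    (n : ℕ) (hn : 1 ≤ n) (t : ℝ) (ht : 0 ≤ t) :
    ∑' j : ℕ,
        (((n + j).factorial : ℝ) / ((j.factorial : ℝ) * (n - 1).factorial) * W *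
            ∫ x in (0:ℝ)..t, (exp (W * x) - 1) ^ j * exp (-((n + j : ℕ) * W * x))) *
          ((1 / ((n + j : ℕ) : ℝ)) * (S / W)) *
          ∏ i ∈ Finset.Ico n (n + j), (1 - (1 / (i : ℝ)) * (S / W))
      = 1 - exp (-(t * S)) := by
  have hc : 0 ≤ (n : ℝ) - S / W := by
    have : S / W ≤ 1 := (div_le_one hW).mpr hSW
    have : (1 : ℝ) ≤ n := by exact_mod_cast hn
    linarith
  set F : ℕ → ℝ → ℝ := fun j x =>
    S * Ring.choose (n - S / W + j - 1) j * ((1 - exp (-(W * x))) ^ j * exp (-(n * W * x)))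
  have hWx : ∀ x ∈ Ι 0 t, 0 ≤ W * x := fun x hx =>
    mul_nonneg hW.le (Set.uIoc_of_le ht ▸ hx).1.le
  have hF_nonneg : ∀ j, ∀ x ∈ Ι 0 t, 0 ≤ F j x := fun j x hx => by
    have := Ring.choose_add_natCast_sub_one_nonneg hc j
    have : 0 ≤ 1 - exp (-(W * x)) := by
      linarith [exp_le_one_iff.mpr (neg_nonpos.mpr (hWx x hx))]
    positivity
  have hsum := intervalIntegral.hasSum_integral_of_nonneg (μ := volume)
    (fun j => (by fun_prop : Continuous (F j)).aestronglyMeasurable) hF_nonneg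
    (fun x hx => hasSum_mul_choose_mul_exp_neg n hW.ne' S (hWx x hx))
    (Continuous.intervalIntegrable (by fun_prop) _ _)
  rw [tsum_congr (summand_eq_integral_choose hn hW.ne' S t), hsum.tsum_eq,
    integral_mul_exp_neg_mul]
end
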